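/- Let k(u) be a finite separable field extension of k generated by an element u, of degree p^g·h where p is a prime not dividing h and g ≥ 1. Then there exist finite separable extensions M₁ ⊇ M₂ ⊇ k such that: (1) k(u) ⊆ M₁ and M₁ = M₂(u); (2) [M₁ : M₂] = p and p does not divide [M₁ : k(u)]. -/

import Mathlib

/-!
Pass to a finite Galois extension `K` of `k` containing `k(u)` and let `H = Gal(K/k(u))`, so that
`p ∣ [G : H]` for `G = Gal(K/k)`. Take a Sylow `p`-subgroup `P` of `H`; since `p` divides
`[G : P]`, `P` lies in a `p`-subgroup `Q` of `G` with `[Q : P] = p`, and `Q ∩ H = P` because `P` is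
already a maximal `p`-subgroup of `H`. The fixed fields `M₁ = K^P ⊇ M₂ = K^Q` then satisfy
`[M₁ : M₂] = p`, `[M₁ : k(u)] = [H : P]` prime to `p`, and `M₂ ⊔ k(u)` has Galois group
`Q ∩ H = P`, i.e. equals `M₁`.
-/

namespace Subgroup

variable {G : Type*} [Group G] [Finite G]

theorem exists_isPGroup_le_not_dvd_relIndex (p : ℕ) [Fact p.Prime] (H : Subgroup G) :
    ∃ P ≤ H, IsPGroup p P ∧ ¬ p ∣ P.relIndex H := by
  obtain ⟨P⟩ : Nonempty (Sylow p H) := inferInstance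
  refine ⟨P.map H.subtype, map_subtype_le _, P.isPGroup'.map _, ?_⟩
  rw [relIndex, subgroupOf, comap_map_eq_self_of_injective H.subtype_injective]
  exact P.not_dvd_index

theorem inf_eq_of_isPGroup_of_not_dvd_relIndex {p : ℕ} [Fact p.Prime] {P Q H : Subgroup G}
    (hPH : P ≤ H) (hPQ : P ≤ Q) (hQ : IsPGroup p Q) (hP : ¬ p ∣ P.relIndex H) : Q ⊓ H = P := by
  obtain ⟨n, hn⟩ := IsPGroup.iff_card.mp (hQ.to_inf_left (K := H))
  obtain ⟨j, -, hj⟩ := (Nat.dvd_prime_pow Fact.out).mp (hn ▸ P.relIndex_dvd_card (Q ⊓ H))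
  have hmul := relIndex_mul_relIndex P (Q ⊓ H) H (le_inf hPQ hPH) inf_le_right
  have hj0 : j = 0 := by
    by_contra hj0
    exact hP (hmul ▸ hj ▸ (dvd_pow_self p hj0).mul_right _)
  rw [hj0, pow_zero, relIndex_eq_one] at hj
  exact le_antisymm hj (le_inf hPQ hPH)

theorem exists_le_inf_eq_card_eq_mul {p : ℕ} [Fact p.Prime] (H : Subgroup G) (hH : p ∣ H.index) :
    ∃ P Q : Subgroup G, P ≤ H ∧ P ≤ Q ∧ Q ⊓ H = P ∧ Nat.card Q = p * Nat.card P ∧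
      ¬ p ∣ P.relIndex H := by
  obtain ⟨P, hPH, hP, hPd⟩ := exists_isPGroup_le_not_dvd_relIndex p H
  obtain ⟨a, ha⟩ := IsPGroup.iff_card.mp hP
  have hdvd : p ^ (a + 1) ∣ Nat.card G := by
    rw [← P.card_mul_index, ← relIndex_mul_index hPH, ha, pow_succ]
    exact mul_dvd_mul_left _ (dvd_mul_of_dvd_right hH _)
  obtain ⟨Q, hQ, hPQ⟩ := Sylow.exists_subgroup_card_pow_succ hdvd ha
  refine ⟨P, Q, hPH, hPQ, inf_eq_of_isPGroup_of_not_dvd_relIndex hPH hPQ (.of_card hQ) hPd,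
    by rw [hQ, ha, pow_succ'], hPd⟩

end Subgroup

open IntermediateField

theorem IsGalois.exists_sup_eq_finrank_eq_prime_mul {k K : Type*} [Field k] [Field K] [Algebra k K]
    [FiniteDimensional k K] [IsGalois k K] {p : ℕ} [Fact p.Prime] (A : IntermediateField k K)
    (hA : p ∣ Module.finrank k A) :
    ∃ M₁ M₂ : IntermediateField k K, M₂ ≤ M₁ ∧ A ≤ M₁ ∧ M₁ = M₂ ⊔ A ∧
      Module.finrank k M₁ = p * Module.finrank k M₂ ∧
      ∃ d : ℕ, ¬ p ∣ d ∧ Module.finrank k M₁ = Module.finrank k A * d := by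
  rw [finrank_eq_fixingSubgroup_index] at hA
  obtain ⟨P, Q, hPH, hPQ, hQH, hQP, hPd⟩ := A.fixingSubgroup.exists_le_inf_eq_card_eq_mul hA
  have finrank_fixedField (R : Subgroup Gal(K/k)) : Module.finrank k (fixedField R) = R.index := by
    rw [finrank_eq_fixingSubgroup_index, fixingSubgroup_fixedField]
  refine ⟨fixedField P, fixedField Q, fixedField_antitone hPQ, (le_iff_le P A).mpr hPH, ?_, ?_,
    P.relIndex A.fixingSubgroup, hPd, ?_⟩
  · rw [← hQH, ← IsGalois.fixedField_fixingSubgroup (fixedField Q ⊔ A), fixingSubgroup_sup,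
      fixingSubgroup_fixedField]
  · rw [finrank_fixedField, finrank_fixedField]
    apply Nat.eq_of_mul_eq_mul_right (Nat.card_pos (α := P))
    rw [P.index_mul_card, ← Q.index_mul_card, hQP]
    ring
  · rw [finrank_fixedField, finrank_eq_fixingSubgroup_index, mul_comm,
      Subgroup.relIndex_mul_index hPH]

theorem IntermediateField.exists_sup_eq_finrank_eq_prime_mul {k Ω : Type*} [Field k] [Field Ω]
    [Algebra k Ω] [IsGalois k Ω] {p : ℕ} [Fact p.Prime] (A : IntermediateField k Ω)
    [FiniteDimensional k A] (hA : p ∣ Module.finrank k A) :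
    ∃ M₁ M₂ : IntermediateField k Ω, M₂ ≤ M₁ ∧ A ≤ M₁ ∧ M₁ = M₂ ⊔ A ∧ FiniteDimensional k M₁ ∧
      Module.finrank k M₁ = p * Module.finrank k M₂ ∧
      ∃ d : ℕ, ¬ p ∣ d ∧ Module.finrank k M₁ = Module.finrank k A * d := by
  have hAL : A ≤ normalClosure k A Ω := le_normalClosure A
  have finrank_lift (M : IntermediateField k (normalClosure k A Ω)) :
      Module.finrank k (lift M) = Module.finrank k M :=
    (liftAlgEquiv M).toLinearEquiv.finrank_eq.symm
  have hA' : Module.finrank k (restrict hAL) = Module.finrank k A :=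
    (restrictAlgEquiv hAL).toLinearEquiv.finrank_eq.symm
  obtain ⟨M₁, M₂, h21, hA1, hsup, h12, d, hd, h1A⟩ :=
    IsGalois.exists_sup_eq_finrank_eq_prime_mul (restrict hAL) (hA' ▸ hA)
  refine ⟨lift M₁, lift M₂, map_mono _ h21, (lift_restrict hAL).symm.trans_le (map_mono _ hA1),
    by rw [hsup, lift_sup, lift_restrict], (liftAlgEquiv M₁).toLinearEquiv.finiteDimensional,
    by rw [finrank_lift, finrank_lift, h12], d, hd, by rw [finrank_lift, h1A, hA']⟩

theorem statement_7_general (k Ω : Type u) [Field k] [Field Ω] [Algebra k Ω]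
    [IsSepClosure k Ω] (u : Ω) (p g h : ℕ) (hp : p.Prime)
    (hg : 1 ≤ g)
    (hdeg : Module.finrank k (IntermediateField.adjoin k {u}) = p ^ g * h) :
    ∃ M₁ M₂ : IntermediateField k Ω,
      M₂ ≤ M₁ ∧
      IntermediateField.adjoin k {u} ≤ M₁ ∧
      M₁ = M₂ ⊔ IntermediateField.adjoin k {u} ∧
      FiniteDimensional k ↥M₁ ∧
      Module.finrank k ↥M₁ = p * Module.finrank k ↥M₂ ∧
      ∃ d : ℕ, ¬ p ∣ d ∧
        Module.finrank k ↥M₁ =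
          Module.finrank k ↥(IntermediateField.adjoin k {u}) * d := by
  have : Fact p.Prime := ⟨hp⟩
  have : FiniteDimensional k k⟮u⟯ := adjoin.finiteDimensional (Algebra.IsIntegral.isIntegral u)
  exact exists_sup_eq_finrank_eq_prime_mul _ (hdeg ▸ (dvd_pow_self p (by omega)).mul_right h)

/-- **folklore.** Let `k(u)` be a finite separable extension of `k`
generated by an element `u` (of a separable closure `Ω` of `k`), of degree
`p^g·h` where `p` is a prime not dividing `h` and `g ≥ 1`.  Then there exist finite
separable extensions `M₁ ⊇ M₂ ⊇ k` such that `k(u) ⊆ M₁`, `M₁ = M₂(u)`,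
`[M₁ : M₂] = p` (expressed by `[M₁ : k] = p·[M₂ : k]`) and `p ∤ [M₁ : k(u)]`
(expressed by `[M₁ : k] = [k(u) : k]·d` with `p ∤ d`). -/
theorem statement_7 (k Ω : Type u) [Field k] [Field Ω] [Algebra k Ω]
    [IsSepClosure k Ω] (u : Ω) (p g h : ℕ) (hp : p.Prime) (hph : ¬ p ∣ h)
    (hg : 1 ≤ g)
    (hdeg : Module.finrank k (IntermediateField.adjoin k {u}) = p ^ g * h) :
    ∃ M₁ M₂ : IntermediateField k Ω,
      M₂ ≤ M₁ ∧
      IntermediateField.adjoin k {u} ≤ M₁ ∧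
      M₁ = M₂ ⊔ IntermediateField.adjoin k {u} ∧
      FiniteDimensional k ↥M₁ ∧
      Module.finrank k ↥M₁ = p * Module.finrank k ↥M₂ ∧
      ∃ d : ℕ, ¬ p ∣ d ∧
        Module.finrank k ↥M₁ =
          Module.finrank k ↥(IntermediateField.adjoin k {u}) * d :=
  statement_7_general k Ω u p g h hp hg hdeg
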